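/- arXiv:2310.06895 — 6 statements merged into one kernel-verified Lean document; each statement's English description precedes it below -/
import Mathlib

section
/- For all integers p ≥ 1 and all integers m, setting k = 3 + m·p, the rational number (p²−1)·(p⁴ + (11−5k)·p² + 10·(k−3)²) / (60·p) is an integer. -/
set_option maxRecDepth 4000 in
lemma sugimoto_aux (p m : ℤ) :
    (60 : ℤ) ∣ (p ^ 2 - 1) * p * (p ^ 2 - 5 * m * p + 10 * m ^ 2 - 4) := by
  have h : ∀ a b : ZMod 60, (a ^ 2 - 1) * a * (a ^ 2 - 5 * b * a + 10 * b ^ 2 - 4) = 0 := by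
    decide
  have h2 : (((p ^ 2 - 1) * p * (p ^ 2 - 5 * m * p + 10 * m ^ 2 - 4) : ℤ) : ZMod 60) = 0 := by
    push_cast
    exact h (p : ZMod 60) (m : ZMod 60)
  exact (ZMod.intCast_zmod_eq_zero_iff_dvd _ _).mp h2

/-- Integrality of the type I / Sugimoto lens-space anomaly when `k = 3 + m·p`. -/
theorem sugimoto_lens_anomaly_integral (p m : ℤ) (hp : 1 ≤ p) (k : ℤ) (hk : k = 3 + m * p) :
    ∃ n : ℤ,
      ((p : ℚ) ^ 2 - 1) * ((p : ℚ) ^ 4 + (11 - 5 * (k : ℚ)) * (p : ℚ) ^ 2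
          + 10 * ((k : ℚ) - 3) ^ 2) / (60 * (p : ℚ)) = (n : ℚ) := by
  obtain ⟨n, hn⟩ := sugimoto_aux p m
  refine ⟨n, ?_⟩
  have hp0 : (p : ℚ) ≠ 0 := by
    have : (0 : ℤ) < p := by omega
    exact_mod_cast this.ne'
  have hq : ((p : ℚ) ^ 2 - 1) * (p : ℚ) * ((p : ℚ) ^ 2 - 5 * m * p + 10 * m ^ 2 - 4)
      = 60 * n := by exact_mod_cast hn
  subst hk
  field_simp
  push_cast
  linear_combination (p : ℚ) * hq
end

section
/- For all odd integers p ≥ 1 and all integers m, setting k = 6 + m·p, the rational number (p²−1)·(5k² − 5k·(p²+12) + 2·(p⁴+11p²+90)) / (120·p) is an integer. -/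
set_option maxRecDepth 10000 in
lemma zmod_aux : ∀ t b : ZMod 120,
    (2*t+1)*((2*t+1)^2-1)*(5*b^2-5*b*(2*t+1)+2*(2*t+1)^2-8) = 0 := by decide

/-- Integrality of the Sagnotti 0'B lens-space anomaly when `k = 6 + m·p` and `p` is odd. -/
theorem sagnotti_lens_anomaly_integral (p m : ℤ) (hp : 1 ≤ p) (hodd : Odd p)
    (k : ℤ) (hk : k = 6 + m * p) :
    ∃ n : ℤ,
      ((p : ℚ) ^ 2 - 1) * (5 * (k : ℚ) ^ 2 - 5 * (k : ℚ) * ((p : ℚ) ^ 2 + 12)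
          + 2 * ((p : ℚ) ^ 4 + 11 * (p : ℚ) ^ 2 + 90)) / (120 * (p : ℚ)) = (n : ℚ) := by
  obtain ⟨t, ht⟩ := hodd
  have hdvd : (120 : ℤ) ∣ p * (p^2 - 1) * (5*m^2 - 5*m*p + 2*p^2 - 8) := by
    apply (ZMod.intCast_zmod_eq_zero_iff_dvd _ 120).mp
    push_cast
    rw [ht]
    push_cast
    have := zmod_aux (t : ZMod 120) (m : ZMod 120)
    linear_combination this
  obtain ⟨n, hn⟩ := hdvd
  refine ⟨n, ?_⟩
  have hp0 : (p : ℚ) ≠ 0 := by positivity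
  have hn' : (p:ℚ) * ((p:ℚ)^2 - 1) * (5*(m:ℚ)^2 - 5*(m:ℚ)*(p:ℚ) + 2*(p:ℚ)^2 - 8)
      = 120 * (n:ℚ) := by exact_mod_cast congrArg (Int.cast : ℤ → ℚ) hn
  subst hk
  push_cast
  field_simp
  linear_combination (p:ℚ) * hn'
end

section
/- For all odd integers p and all integers m, 120 divides (p²−1)·p·(2p² − 5·m·p + 5·m² − 8). -/
lemma zmod_dvd_core (n : ℕ) [NeZero n] (p m : ℤ)
    (h : ((p : ZMod n) ^ 2 - 1) * p * (2 * (p : ZMod n) ^ 2 - 5 * m * p + 5 * m ^ 2 - 8) = 0) :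
    (n : ℤ) ∣ (p ^ 2 - 1) * p * (2 * p ^ 2 - 5 * m * p + 5 * m ^ 2 - 8) := by
  rw [← ZMod.intCast_zmod_eq_zero_iff_dvd]
  push_cast
  exact h

/-- Arithmetic core of the Sagnotti lens-space anomaly integrality for odd `p`. -/
theorem onetwenty_dvd_anomaly_core (p m : ℤ) (hodd : Odd p) :
    (120 : ℤ) ∣ (p ^ 2 - 1) * p * (2 * p ^ 2 - 5 * m * p + 5 * m ^ 2 - 8) := by
  obtain ⟨k, hk⟩ := hodd
  have h8 : (8 : ℤ) ∣ (p ^ 2 - 1) * p * (2 * p ^ 2 - 5 * m * p + 5 * m ^ 2 - 8) := by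
    apply zmod_dvd_core 8
    subst hk
    push_cast
    have key : ∀ a b : ZMod 8,
        ((2*a+1) ^ 2 - 1) * (2*a+1) * (2 * (2*a+1) ^ 2 - 5 * b * (2*a+1) + 5 * b ^ 2 - 8) = 0 := by
      decide
    exact key k m
  have h3 : (3 : ℤ) ∣ (p ^ 2 - 1) * p * (2 * p ^ 2 - 5 * m * p + 5 * m ^ 2 - 8) := by
    apply zmod_dvd_core 3
    have key : ∀ a b : ZMod 3,
        (a ^ 2 - 1) * a * (2 * a ^ 2 - 5 * b * a + 5 * b ^ 2 - 8) = 0 := by decide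
    exact key p m
  have h5 : (5 : ℤ) ∣ (p ^ 2 - 1) * p * (2 * p ^ 2 - 5 * m * p + 5 * m ^ 2 - 8) := by
    apply zmod_dvd_core 5
    have key : ∀ a b : ZMod 5,
        (a ^ 2 - 1) * a * (2 * a ^ 2 - 5 * b * a + 5 * b ^ 2 - 8) = 0 := by decide
    exact key p m
  have c35 : IsCoprime (3 : ℤ) 5 := by
    rw [Int.isCoprime_iff_gcd_eq_one]; decide
  have h15 : (15 : ℤ) ∣ _ := c35.mul_dvd h3 h5
  have c815 : IsCoprime (8 : ℤ) 15 := by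
    rw [Int.isCoprime_iff_gcd_eq_one]; decide
  have := c815.mul_dvd h8 h15
  norm_num at this
  exact this
end

section
/- For a positive integer p, the rational number (p⁶ + 5p⁴ + 34p² − 40)/(60·p) is an integer if and only if p = 1 or p = 2. -/
/-- The `E₈×E₈` lens-space anomaly for the `(1,0)` embedding is integral iff `p = 1` or `p = 2`. -/
theorem e8e8_lens_anomaly_integral_iff (p : ℤ) (hp : 0 < p) :
    (∃ n : ℤ,
        ((p : ℚ) ^ 6 + 5 * (p : ℚ) ^ 4 + 34 * (p : ℚ) ^ 2 - 40) / (60 * (p : ℚ)) = (n : ℚ))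
      ↔ p = 1 ∨ p = 2 := by
  have hp0 : (p : ℚ) ≠ 0 := by exact_mod_cast hp.ne'
  constructor
  · rintro ⟨n, h⟩
    rw [div_eq_iff (by positivity)] at h
    have h' : p ^ 6 + 5 * p ^ 4 + 34 * p ^ 2 - 40 = n * (60 * p) := by exact_mod_cast h
    have hd : p ∣ 40 := by
      have : p ∣ p ^ 6 + 5 * p ^ 4 + 34 * p ^ 2 - (p ^ 6 + 5 * p ^ 4 + 34 * p ^ 2 - 40) := by
        refine dvd_sub (by ring_nf; exact ⟨p^5 + 5*p^3 + 34*p, by ring⟩) ?_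
        rw [h']; exact ⟨n * 60, by ring⟩
      simpa using this
    have hle : p ≤ 40 := Int.le_of_dvd (by norm_num) hd
    interval_cases p <;> norm_num at h' ⊢ <;> omega
  · rintro (rfl | rfl) <;> norm_num
    · exact ⟨0, by norm_num⟩
    · exact ⟨2, by norm_num⟩
end

section
/- In the polynomial ring ℚ[a, b, p₁, p₂], the following identity holds: (1/192)·(8a² + 8b² + 4(a+b)p₁ − 8ab + 3p₁² − 4p₂) = (a−b)²/32 + ((p₁+a+b)/2)²/24 + (p₁² − 7p₂)/360 + 2·(7p₁² − 4p₂)/5760. -/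
open MvPolynomial

/-- Decomposition of the `E₈×E₈` Green-Schwarz eight-form
`X₈ = (a−b)²/32 + X₄²/24 + I_SD + 2·I_Dirac` in `ℚ[a, b, p₁, p₂]`,
where `a = X 0`, `b = X 1`, `p₁ = X 2`, `p₂ = X 3`. -/
theorem X8_e8e8_decomposition :
    let a : MvPolynomial (Fin 4) ℚ := X 0
    let b : MvPolynomial (Fin 4) ℚ := X 1
    let p1 : MvPolynomial (Fin 4) ℚ := X 2
    let p2 : MvPolynomial (Fin 4) ℚ := X 3
    C (1/192 : ℚ) * (8 * a ^ 2 + 8 * b ^ 2 + 4 * (a + b) * p1 - 8 * a * b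
          + 3 * p1 ^ 2 - 4 * p2)
      = C (1/32 : ℚ) * (a - b) ^ 2
        + C (1/24 : ℚ) * (C (1/2 : ℚ) * (p1 + a + b)) ^ 2
        + C (1/360 : ℚ) * (p1 ^ 2 - 7 * p2)
        + 2 * (C (1/5760 : ℚ) * (7 * p1 ^ 2 - 4 * p2)) := by
  intro a b p1 p2
  have h1 : (C (1/192 : ℚ) : MvPolynomial (Fin 4) ℚ) = 30 * C (1/5760) := by
    rw [← map_ofNat (C : ℚ →+* MvPolynomial (Fin 4) ℚ) 30, ← C_mul]; norm_num
  have h2 : (C (1/32 : ℚ) : MvPolynomial (Fin 4) ℚ) = 180 * C (1/5760) := by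
    rw [← map_ofNat (C : ℚ →+* MvPolynomial (Fin 4) ℚ) 180, ← C_mul]; norm_num
  have h4 : (C (1/360 : ℚ) : MvPolynomial (Fin 4) ℚ) = 16 * C (1/5760) := by
    rw [← map_ofNat (C : ℚ →+* MvPolynomial (Fin 4) ℚ) 16, ← C_mul]; norm_num
  have h5 : (C (1/2 : ℚ) : MvPolynomial (Fin 4) ℚ) ^ 2 = C (1/4) := by
    rw [← C_pow]; norm_num
  have h3 : (C (1/24 : ℚ) : MvPolynomial (Fin 4) ℚ) * C (1/4) = 60 * C (1/5760) := by
    rw [← C_mul, ← map_ofNat (C : ℚ →+* MvPolynomial (Fin 4) ℚ) 60, ← C_mul]; norm_num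
  rw [mul_pow, h5, ← mul_assoc, h3, h1, h2, h4]
  ring
end

section
/- In the polynomial ring ℚ[a, b, c₄ᵃ, c₄ᵇ, p₁, p₂], the following identity holds: (1/24)·(a² + b² + ab − 4c₄ᵃ − 4c₄ᵇ) = −(a−b)²/32 − (p₁²−7p₂)/360 − 4·(7p₁²−4p₂)/5760 − (1/96)·(p₁+a+b)·(a+b+3p₁) + [16·(7p₁²−4p₂)/5760 + p₁·a/24 + (a²−2c₄ᵃ)/12] + [16·(7p₁²−4p₂)/5760 + p₁·b/24 + (b²−2c₄ᵇ)/12]. -/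
open MvPolynomial

/-- Decomposition of the `SO(16)×SO(16)` Green-Schwarz eight-form into manifestly integral
index densities plus terms vanishing on twisted string manifolds, in
`ℚ[a, b, c₄ᵃ, c₄ᵇ, p₁, p₂]` with `a = X 0`, `b = X 1`, `c₄ᵃ = X 2`, `c₄ᵇ = X 3`,
`p₁ = X 4`, `p₂ = X 5`. -/
theorem X8_so16_decomposition :
    let a : MvPolynomial (Fin 6) ℚ := X 0
    let b : MvPolynomial (Fin 6) ℚ := X 1
    let c4a : MvPolynomial (Fin 6) ℚ := X 2
    let c4b : MvPolynomial (Fin 6) ℚ := X 3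
    let p1 : MvPolynomial (Fin 6) ℚ := X 4
    let p2 : MvPolynomial (Fin 6) ℚ := X 5
    C (1/24 : ℚ) * (a ^ 2 + b ^ 2 + a * b - 4 * c4a - 4 * c4b)
      = - (C (1/32 : ℚ) * (a - b) ^ 2)
        - C (1/360 : ℚ) * (p1 ^ 2 - 7 * p2)
        - 4 * (C (1/5760 : ℚ) * (7 * p1 ^ 2 - 4 * p2))
        - C (1/96 : ℚ) * (p1 + a + b) * (a + b + 3 * p1)
        + (16 * (C (1/5760 : ℚ) * (7 * p1 ^ 2 - 4 * p2))
            + C (1/24 : ℚ) * p1 * a + C (1/12 : ℚ) * (a ^ 2 - 2 * c4a))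
        + (16 * (C (1/5760 : ℚ) * (7 * p1 ^ 2 - 4 * p2))
            + C (1/24 : ℚ) * p1 * b + C (1/12 : ℚ) * (b ^ 2 - 2 * c4b)) := by
  have h24 : (C (1/24 : ℚ) : MvPolynomial (Fin 6) ℚ) = 240 * C (1/5760 : ℚ) := by rw [show ((240:MvPolynomial (Fin 6) ℚ)) = C 240 from (map_ofNat C 240).symm, ← C_mul]; norm_num
  have h32 : (C (1/32 : ℚ) : MvPolynomial (Fin 6) ℚ) = 180 * C (1/5760 : ℚ) := by rw [show ((180:MvPolynomial (Fin 6) ℚ)) = C 180 from (map_ofNat C 180).symm, ← C_mul]; norm_num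
  have h360 : (C (1/360 : ℚ) : MvPolynomial (Fin 6) ℚ) = 16 * C (1/5760 : ℚ) := by rw [show ((16:MvPolynomial (Fin 6) ℚ)) = C 16 from (map_ofNat C 16).symm, ← C_mul]; norm_num
  have h96 : (C (1/96 : ℚ) : MvPolynomial (Fin 6) ℚ) = 60 * C (1/5760 : ℚ) := by rw [show ((60:MvPolynomial (Fin 6) ℚ)) = C 60 from (map_ofNat C 60).symm, ← C_mul]; norm_num
  have h12 : (C (1/12 : ℚ) : MvPolynomial (Fin 6) ℚ) = 480 * C (1/5760 : ℚ) := by rw [show ((480:MvPolynomial (Fin 6) ℚ)) = C 480 from (map_ofNat C 480).symm, ← C_mul]; norm_num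
  simp only [h24, h32, h360, h96, h12]
  ring
end
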